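/- arXiv:1903.06090 — 13 statements merged into one kernel-verified Lean document; each statement's English description precedes it below -/
import Mathlib

section
/- Let P be a finite p-group of exponent p^m, and let M = Ω_{m-1}(P) be the subgroup generated by elements of order dividing p^{m-1}. If M ≠ P, then ψ(P) = ψ(M) + |M|·p^m·(|P|/|M| − 1), where ψ(H) denotes the sum of the orders of the elements of H. -/
/-- Sum of the orders of the elements of a group. -/
noncomputable def psi (G : Type*) [Group G] : ℕ := ∑ᶠ x : G, orderOf x

/-- `Omega p G i` is the subgroup generated by all `x` with `x ^ p ^ i = 1`. -/
def Omega (p : ℕ) (G : Type*) [Group G] (i : ℕ) : Subgroup G :=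
  Subgroup.closure {x : G | x ^ p ^ i = 1}

/-- The class `CP₂`: `o(xy) ≤ max (o x) (o y)` for all `x y`. -/
def CP2 (G : Type*) [Group G] : Prop :=
  ∀ x y : G, orderOf (x * y) ≤ max (orderOf x) (orderOf y)

theorem stmt_0 {p m : ℕ} (hp : p.Prime) (P : Type*) [Group P] [Finite P]
    (hP : IsPGroup p P) (hexp : Monoid.exponent P = p ^ m)
    (hM : Omega p P (m - 1) ≠ ⊤) :
    psi P = psi (Omega p P (m - 1)) +
      Nat.card (Omega p P (m - 1)) * p ^ m *
        (Nat.card P / Nat.card (Omega p P (m - 1)) - 1) := by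
  classical
  set M := Omega p P (m - 1) with hMdef
  haveI : Fintype P := Fintype.ofFinite P
  -- elements outside M have order p^m
  have hord : ∀ x : P, x ∉ M → orderOf x = p ^ m := by
    intro x hx
    have hdvd : orderOf x ∣ p ^ m := hexp ▸ Monoid.order_dvd_exponent x
    obtain ⟨k, hk, hke⟩ := (Nat.dvd_prime_pow hp).mp hdvd
    have hkm : ¬ k ≤ m - 1 := by
      intro hkle
      apply hx
      apply Subgroup.subset_closure
      show x ^ p ^ (m - 1) = 1
      apply orderOf_dvd_iff_pow_eq_one.mp
      rw [hke]
      exact pow_dvd_pow p hkle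
    have : k = m := by omega
    rw [hke, this]
  have hMcard : Nat.card M ∣ Nat.card P := Subgroup.card_subgroup_dvd_card M
  obtain ⟨c, hc⟩ := hMcard
  have hMpos : 0 < Nat.card M := Nat.card_pos
  have hcpos : 0 < c := by
    rcases Nat.eq_zero_or_pos c with h | h
    · exfalso; have hPpos := Nat.card_pos (α := P); rw [h, mul_zero] at hc; omega
    · exact h
  -- split the sum
  have hpsiP : psi P = ∑ x : P, orderOf x := finsum_eq_sum_of_fintype _
  have hpsiM : psi M = ∑ x : M, orderOf x := finsum_eq_sum_of_fintype _
  have hsplit : ∑ x : P, orderOf x =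
      (∑ x ∈ Finset.univ.filter (· ∈ M), orderOf x) +
      (∑ x ∈ Finset.univ.filter (· ∉ M), orderOf x) :=
    (Finset.sum_filter_add_sum_filter_not _ _ _).symm
  have h1 : ∑ x ∈ Finset.univ.filter (· ∈ M), orderOf x = ∑ x : M, orderOf x := by
    rw [show (∑ x : M, orderOf x) = ∑ x : M, orderOf (x : P) from
      Finset.sum_congr rfl fun x _ => (Subgroup.orderOf_coe x).symm]
    exact Finset.sum_subtype _ (by simp) _
  have h2 : ∑ x ∈ Finset.univ.filter (· ∉ M), orderOf x =
      (Nat.card P - Nat.card M) * p ^ m := by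
    rw [Finset.sum_congr rfl (fun x hx => hord x (by simpa using hx))]
    rw [Finset.sum_const, smul_eq_mul]
    congr 1
    rw [Finset.filter_not, Finset.card_sdiff_of_subset (Finset.filter_subset _ _)]
    simp [Nat.card_eq_fintype_card, Fintype.card_subtype]
  have harith : Nat.card M * p ^ m * (Nat.card P / Nat.card M - 1) =
      (Nat.card P - Nat.card M) * p ^ m := by
    rw [hc, Nat.mul_div_cancel_left _ hMpos, Nat.mul_sub, Nat.sub_mul]
    congr 1 <;> ring
  rw [hpsiP, hpsiM, hsplit, h1, h2, harith]
end

section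
/- Let P and Q be finite p-groups of the same order p^n, with exp(P) = p^m and Ω_{m-1}(P) ≠ P. If exp(P) > exp(Q), then ψ(P) > ψ(Q). -/
/-!
Write `N = p ^ n`. Every element of `Q` has order at most `exp Q`, and `exp Q * p ≤ p ^ m` since
`exp Q` is a smaller power of `p`; so `ψ(Q) * p ≤ N * p ^ m`. In `P`, every element outside the
proper subgroup `H = Ω_{m-1}(P)` has order exactly `p ^ m`, and `|H| * p ≤ N`. Hence
`N ≤ (N - |H|) * p`, and `N * p ^ m ≤ (N - |H|) * p ^ m * p < ψ(P) * p`.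
-/

lemma Nat.mul_le_of_dvd_prime_pow_of_lt {p n m a : ℕ} (hp : p.Prime) (ha : a ∣ p ^ n)
    (hlt : a < p ^ m) : a * p ≤ p ^ m := by
  obtain ⟨k, -, rfl⟩ := (Nat.dvd_prime_pow hp).mp ha
  rw [← pow_succ]
  exact Nat.pow_le_pow_right hp.pos ((Nat.pow_lt_pow_iff_right hp.one_lt).mp hlt)

lemma IsPGroup.card_mul_le_of_ne_top {p : ℕ} [Fact p.Prime] {G : Type*} [Group G] [Finite G]
    (hG : IsPGroup p G) {H : Subgroup G} (hH : H ≠ ⊤) : Nat.card H * p ≤ Nat.card G := by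
  obtain ⟨k, hk⟩ := hG.index H
  have hk0 : k ≠ 0 := by
    rintro rfl
    exact hH (Subgroup.index_eq_one.mp hk)
  rw [← H.card_mul_index, hk]
  exact Nat.mul_le_mul_left _ (Nat.le_self_pow hk0 p)

lemma orderOf_eq_of_notMem_Omega {p m : ℕ} (hp : p.Prime) {G : Type*} [Group G] {x : G}
    (hx : orderOf x ∣ p ^ m) (hxΩ : x ∉ Omega p G (m - 1)) : orderOf x = p ^ m := by
  obtain ⟨i, hi, hix⟩ := (Nat.dvd_prime_pow hp).mp hx
  refine hix.trans (congrArg _ (hi.antisymm (not_lt.mp fun him => hxΩ ?_)))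
  refine Subgroup.subset_closure (orderOf_dvd_iff_pow_eq_one.mp ?_)
  exact hix ▸ pow_dvd_pow p (Nat.le_sub_one_of_lt him)

section psi

variable {G : Type*} [Group G] [Finite G]

lemma psi_le_card_mul_exponent : psi G ≤ Nat.card G * Monoid.exponent G := by
  cases nonempty_fintype G
  rw [psi, finsum_eq_sum_of_fintype, Nat.card_eq_fintype_card, ← smul_eq_mul, ← Finset.card_univ]
  exact Finset.sum_le_card_nsmul _ _ _ fun x _ =>
    Monoid.orderOf_le_exponent Monoid.ExponentExists.of_finite x

lemma card_sub_mul_lt_psi {H : Subgroup G} {e : ℕ} (he : ∀ x ∉ H, orderOf x = e) :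
    (Nat.card G - Nat.card H) * e < psi G := by
  classical
  cases nonempty_fintype G
  have hcompl : (Finset.univ.filter (· ∉ H)).card = Nat.card G - Nat.card H := by
    rw [Finset.filter_not, Finset.card_sdiff_of_subset (Finset.filter_subset _ _),
      Finset.card_univ, Nat.card_eq_fintype_card, Nat.card_eq_fintype_card, Fintype.card_subtype]
  have hH : 0 < ∑ x ∈ Finset.univ.filter (· ∈ H), orderOf x :=
    Finset.sum_pos (fun x _ => orderOf_pos x) ⟨1, by simp⟩
  have hcompl_sum : ∑ x ∈ Finset.univ.filter (· ∉ H), orderOf x = (Nat.card G - Nat.card H) * e := by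
    rw [Finset.sum_congr rfl fun x hx => he x (Finset.mem_filter.mp hx).2, Finset.sum_const,
      hcompl, smul_eq_mul]
  rw [psi, finsum_eq_sum_of_fintype, ← Finset.sum_filter_add_sum_filter_not _ (· ∈ H)]
  omega

end psi

theorem stmt_1_general {p n m : ℕ} (hp : p.Prime) (P Q : Type*) [Group P] [Finite P]
    [Group Q] [Finite Q] (hPp : IsPGroup p P)
    (hcardP : Nat.card P = p ^ n) (hcardQ : Nat.card Q = p ^ n)
    (hexpP : Monoid.exponent P = p ^ m) (hM : Omega p P (m - 1) ≠ ⊤)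
    (hlt : Monoid.exponent Q < Monoid.exponent P) :
    psi Q < psi P := by
  have := Fact.mk hp
  set H := Omega p P (m - 1)
  have hQ : psi Q * p ≤ p ^ n * p ^ m := by
    have hexpQ : Monoid.exponent Q * p ≤ p ^ m :=
      Nat.mul_le_of_dvd_prime_pow_of_lt hp (hcardQ ▸ Group.exponent_dvd_nat_card) (hexpP ▸ hlt)
    calc psi Q * p ≤ p ^ n * Monoid.exponent Q * p := by
          gcongr; exact hcardQ ▸ psi_le_card_mul_exponent
      _ ≤ p ^ n * p ^ m := by rw [mul_assoc]; gcongr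
  have hP : (p ^ n - Nat.card H) * p ^ m < psi P := hcardP ▸ card_sub_mul_lt_psi fun x hx =>
    orderOf_eq_of_notMem_Omega hp (hexpP ▸ Monoid.order_dvd_exponent x) hx
  have hH : Nat.card H * p ≤ p ^ n := hcardP ▸ hPp.card_mul_le_of_ne_top hM
  have hN : p ^ n ≤ (p ^ n - Nat.card H) * p := by
    have := hp.two_le
    zify [(Nat.le_mul_of_pos_right _ hp.pos).trans hH] at hH ⊢
    nlinarith
  refine lt_of_mul_lt_mul_right (hQ.trans_lt ?_) (Nat.zero_le p)
  calc p ^ n * p ^ m ≤ (p ^ n - Nat.card H) * p * p ^ m := by gcongr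
    _ = (p ^ n - Nat.card H) * p ^ m * p := by ring
    _ < psi P * p := by gcongr; exact hp.pos

theorem stmt_1 {p n m : ℕ} (hp : p.Prime) (P Q : Type*) [Group P] [Finite P]
    [Group Q] [Finite Q] (hPp : IsPGroup p P) (hQp : IsPGroup p Q)
    (hcardP : Nat.card P = p ^ n) (hcardQ : Nat.card Q = p ^ n)
    (hexpP : Monoid.exponent P = p ^ m) (hM : Omega p P (m - 1) ≠ ⊤)
    (hlt : Monoid.exponent Q < Monoid.exponent P) :
    psi Q < psi P :=
  stmt_1_general hp P Q hPp hcardP hcardQ hexpP hM hlt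
end

section
/- Let P be a finite p-group in the class CP₂ (i.e., o(xy) ≤ max{o(x), o(y)} for all x, y ∈ P). If |Ω_1(P)| = p^r, then ψ(P) = 1 − p + p^{r+1}·ψ(P/Ω_1(P)). -/
theorem stmt_2 {p r : ℕ} (hp : p.Prime) (P : Type*) [Group P] [Finite P]
    (hP : IsPGroup p P) (hcp : CP2 P) [(Omega p P 1).Normal]
    (hr : Nat.card (Omega p P 1) = p ^ r) :
    (psi P : ℤ) = 1 - p + p ^ (r + 1) * psi (P ⧸ Omega p P 1) := by
  classical
  have hfP := Fintype.ofFinite P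
  have hfQ := Fintype.ofFinite (P ⧸ Omega p P 1)
  -- every element has p-power order
  have hpow : ∀ x : P, ∃ m, orderOf x = p ^ m := by
    intro x
    obtain ⟨k, hk⟩ := hP x
    obtain ⟨m, _, hm⟩ := (Nat.dvd_prime_pow hp).mp (orderOf_dvd_of_pow_eq_one hk)
    exact ⟨m, hm⟩
  -- the set of elements of order dividing p is closed under multiplication
  have hSmul : ∀ a b : P, a ^ p = 1 → b ^ p = 1 → (a * b) ^ p = 1 := by
    intro a b ha hb
    have h1 : orderOf (a * b) ≤ p :=
      le_trans (hcp a b) (max_le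
        (Nat.le_of_dvd hp.pos (orderOf_dvd_of_pow_eq_one ha))
        (Nat.le_of_dvd hp.pos (orderOf_dvd_of_pow_eq_one hb)))
    obtain ⟨m, hm⟩ := hpow (a * b)
    have hm1 : m ≤ 1 := by
      by_contra h
      push_neg at h
      have : p ^ 2 ≤ p ^ m := Nat.pow_le_pow_right hp.pos h
      have : p * p ≤ p := by
        calc p * p = p ^ 2 := (sq p).symm
        _ ≤ p ^ m := this
        _ ≤ p := hm ▸ h1
      nlinarith [hp.one_lt]
    have hd : p ^ m ∣ p := by
      have := pow_dvd_pow p hm1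
      rwa [pow_one] at this
    exact orderOf_dvd_iff_pow_eq_one.mp (hm ▸ hd)
  -- the subgroup of elements of order dividing p
  set S : Subgroup P :=
    { carrier := {x : P | x ^ p = 1}
      one_mem' := one_pow p
      mul_mem' := fun ha hb => hSmul _ _ ha hb
      inv_mem' := fun ha => by
        simp only [Set.mem_setOf_eq] at *
        rw [inv_pow, ha, inv_one] } with hS
  have hmem : ∀ x : P, x ∈ Omega p P 1 ↔ x ^ p = 1 := by
    intro x
    have hEq : Omega p P 1 = S := by
      have : {x : P | x ^ p ^ 1 = 1} = (S : Set P) := by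
        ext y; simp [hS, pow_one]
      rw [Omega, this, Subgroup.closure_eq]
    rw [hEq]
    exact Iff.rfl
  -- the key order formula
  have hord : ∀ x : P, x ≠ 1 →
      orderOf x = p * orderOf (QuotientGroup.mk x : P ⧸ Omega p P 1) := by
    intro x hx
    by_cases hxp : x ^ p = 1
    · have h1 : (QuotientGroup.mk x : P ⧸ Omega p P 1) = 1 :=
        (QuotientGroup.eq_one_iff x).mpr ((hmem x).mpr hxp)
      rw [h1, orderOf_one, mul_one]
      rcases (Nat.dvd_prime hp).mp (orderOf_dvd_of_pow_eq_one hxp) with h | h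
      · exact absurd (orderOf_eq_one_iff.mp h) hx
      · exact h
    · obtain ⟨m, hm⟩ := hpow x
      have hm2 : 2 ≤ m := by
        by_contra h
        push_neg at h
        have hd : p ^ m ∣ p := by
          have := pow_dvd_pow p (show m ≤ 1 by omega)
          rwa [pow_one] at this
        exact hxp (orderOf_dvd_iff_pow_eq_one.mp (hm ▸ hd))
      -- upper bound on quotient order
      have hup : (QuotientGroup.mk x : P ⧸ Omega p P 1) ^ p ^ (m - 1) = 1 := by
        rw [← QuotientGroup.mk_pow]
        apply (QuotientGroup.eq_one_iff _).mpr
        apply (hmem _).mpr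
        rw [← pow_mul, ← pow_succ]
        have : m - 1 + 1 = m := by omega
        rw [this, ← hm]
        exact pow_orderOf_eq_one x
      obtain ⟨j, hj, hjm⟩ := (Nat.dvd_prime_pow hp).mp (orderOf_dvd_of_pow_eq_one hup)
      have hjeq : j = m - 1 := by
        by_contra hne
        have hj2 : j + 1 ≤ m - 1 := by omega
        have h1 : (QuotientGroup.mk x : P ⧸ Omega p P 1) ^ p ^ j = 1 := by
          rw [← hjm]; exact pow_orderOf_eq_one _
        rw [← QuotientGroup.mk_pow] at h1
        have h2 : (x ^ p ^ j) ^ p = 1 := (hmem _).mp ((QuotientGroup.eq_one_iff _).mp h1)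
        rw [← pow_mul, ← pow_succ] at h2
        have h3 : p ^ m ∣ p ^ (j + 1) := hm ▸ orderOf_dvd_of_pow_eq_one h2
        have := Nat.pow_dvd_pow_iff_le_right hp.one_lt |>.mp h3
        omega
      rw [hjm, hjeq, ← pow_succ']
      have : m - 1 + 1 = m := by omega
      rw [this, hm]
  -- fiber cardinality
  have hfib : ∀ q : P ⧸ Omega p P 1,
      (Finset.univ.filter fun x : P => (QuotientGroup.mk x : P ⧸ Omega p P 1) = q).card
        = p ^ r := by
    intro q
    have h1 : Nat.card ((QuotientGroup.mk : P → P ⧸ Omega p P 1) ⁻¹' {q})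
        = Nat.card (Omega p P 1) * Nat.card ({q} : Set (P ⧸ Omega p P 1)) :=
      QuotientGroup.card_preimage_mk _ _
    have h2 : Nat.card ({q} : Set (P ⧸ Omega p P 1)) = 1 := by simp
    rw [h2, mul_one, hr] at h1
    rw [← Fintype.card_subtype, ← Nat.card_eq_fintype_card, ← h1]
    exact Nat.card_congr (Equiv.subtypeEquivRight (by simp)).symm
  -- rewrite psi as finite sums
  have psiP : (psi P : ℤ) = ∑ x : P, (orderOf x : ℤ) := by
    rw [psi, finsum_eq_sum_of_fintype]
    push_cast
    rfl
  have psiQ : (psi (P ⧸ Omega p P 1) : ℤ) = ∑ q : P ⧸ Omega p P 1, (orderOf q : ℤ) := by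
    rw [psi, finsum_eq_sum_of_fintype]
    push_cast
    rfl
  -- sum over P of quotient orders
  have h2 : ∑ x : P, (orderOf (QuotientGroup.mk x : P ⧸ Omega p P 1) : ℤ)
      = (p : ℤ) ^ r * ∑ q : P ⧸ Omega p P 1, (orderOf q : ℤ) := by
    rw [← Finset.sum_fiberwise' Finset.univ
      (fun x : P => (QuotientGroup.mk x : P ⧸ Omega p P 1))
      (fun q => (orderOf q : ℤ)), Finset.mul_sum]
    refine Finset.sum_congr rfl fun q _ => ?_
    rw [Finset.sum_const, hfib q, nsmul_eq_mul]
    push_cast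
    ring
  -- main computation
  have h1 : ∀ x : P, (orderOf x : ℤ)
      = (if x = 1 then 1 - (p : ℤ) else 0)
        + p * orderOf (QuotientGroup.mk x : P ⧸ Omega p P 1) := by
    intro x
    by_cases hx : x = 1
    · subst hx; simp
    · rw [if_neg hx, hord x hx]; push_cast; ring
  rw [psiP, Finset.sum_congr rfl fun x _ => h1 x, Finset.sum_add_distrib,
    ← Finset.mul_sum, h2, psiQ]
  rw [Finset.sum_ite_eq' Finset.univ (1 : P) (fun _ => 1 - (p : ℤ))]
  simp only [Finset.mem_univ, if_true]
  ring
end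

section
/- Let P and Q be finite p-groups of the same order, both in CP₂. If ψ(P) = ψ(Q), then |Ω_1(P)| = |Ω_1(Q)|. -/
lemma omega_coe {p : ℕ} (hp : p.Prime) {G : Type*} [Group G]
    (hord : ∀ x : G, ∃ k, orderOf x = p ^ k) (hcp : CP2 G) (j : ℕ) :
    ((Omega p G j : Subgroup G) : Set G) = {x : G | x ^ p ^ j = 1} := by
  have hpj : 0 < p ^ j := pow_pos hp.pos j
  let H : Subgroup G :=
    { carrier := {x : G | x ^ p ^ j = 1}
      one_mem' := one_pow _
      mul_mem' := by
        intro x y hx hy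
        obtain ⟨m, hm⟩ := hord (x * y)
        have hxle : orderOf x ≤ p ^ j :=
          Nat.le_of_dvd hpj (orderOf_dvd_iff_pow_eq_one.mpr hx)
        have hyle : orderOf y ≤ p ^ j :=
          Nat.le_of_dvd hpj (orderOf_dvd_iff_pow_eq_one.mpr hy)
        have hle : orderOf (x * y) ≤ p ^ j :=
          le_trans (hcp x y) (max_le hxle hyle)
        rw [hm] at hle
        have hmj : m ≤ j := (pow_le_pow_iff_right₀ hp.one_lt).mp hle
        have : orderOf (x * y) ∣ p ^ j := hm ▸ pow_dvd_pow p hmj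
        exact orderOf_dvd_iff_pow_eq_one.mp this
      inv_mem' := by
        intro x hx
        show x⁻¹ ^ p ^ j = 1
        rw [inv_pow, hx, inv_one] }
  have : Omega p G j = H := Subgroup.closure_eq H
  rw [this]; rfl

lemma omega_card {p : ℕ} (hp : p.Prime) {G : Type*} [Group G] [Fintype G] [DecidableEq G]
    (hord : ∀ x : G, ∃ k, orderOf x = p ^ k) (hcp : CP2 G) (j : ℕ) :
    Nat.card (Omega p G j) = (Finset.univ.filter (fun x : G => x ^ p ^ j = 1)).card := by
  have hmem : ∀ x : G, x ∈ Omega p G j ↔ x ^ p ^ j = 1 := by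
    intro x
    rw [← Subgroup.mem_carrier]
    rw [show ((Omega p G j).carrier) = {x : G | x ^ p ^ j = 1} from omega_coe hp hord hcp j]
    rfl
  rw [Nat.card_congr (Equiv.subtypeEquivRight hmem), Nat.card_eq_fintype_card,
    Fintype.card_subtype]

open Finset in
lemma key {p : ℕ} (hp : p.Prime) (G : Type*) [Group G] [Fintype G] [DecidableEq G]
    (hGp : IsPGroup p G) (hcp : CP2 G) :
    ∃ m, psi G + p = p * Nat.card (Omega p G 1) * (1 + p * m) + 1 := by
  haveI : Fact p.Prime := ⟨hp⟩
  have hord : ∀ x : G, ∃ k, orderOf x = p ^ k := IsPGroup.iff_orderOf.mp hGp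
  set A := Nat.card (Omega p G 1) with hAdef
  have hApos : 0 < A := Nat.card_pos
  -- A as a filter cardinality
  have hAcard : A = (univ.filter (fun x : G => x ^ p = 1)).card := by
    rw [hAdef, omega_card hp hord hcp 1, pow_one]
  -- A divides the count of p^j-torsion for j ≥ 1
  have hAdvd : ∀ j : ℕ, 1 ≤ j → A ∣ (univ.filter (fun x : G => x ^ p ^ j = 1)).card := by
    intro j hj
    rw [← omega_card hp hord hcp j, hAdef]
    refine Subgroup.card_dvd_of_le (Subgroup.closure_mono ?_)
    intro x hx
    simp only [Set.mem_setOf_eq] at hx ⊢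
    have : orderOf x ∣ p ^ j :=
      dvd_trans (orderOf_dvd_iff_pow_eq_one.mpr (by simpa using hx))
        (dvd_pow_self p (by omega))
    exact orderOf_dvd_iff_pow_eq_one.mp this
  have hpsi : psi G = ∑ x : G, orderOf x := finsum_eq_sum_of_fintype _
  set S1 := univ.filter (fun x : G => x ^ p = 1) with hS1def
  set S2 := univ.filter (fun x : G => ¬ x ^ p = 1) with hS2def
  have hsplit : ∑ x : G, orderOf x = ∑ x ∈ S1, orderOf x + ∑ x ∈ S2, orderOf x :=
    (Finset.sum_filter_add_sum_filter_not _ _ _).symm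
  have h1S1 : (1 : G) ∈ S1 := by simp [hS1def]
  have hS1sum : ∑ x ∈ S1, orderOf x = 1 + (A - 1) * p := by
    rw [← Finset.insert_erase h1S1, Finset.sum_insert (Finset.notMem_erase _ _), orderOf_one]
    congr 1
    have hpe : ∀ x ∈ S1.erase 1, orderOf x = p := by
      intro x hx
      have hx1 : x ≠ 1 := Finset.ne_of_mem_erase hx
      have hxp : x ^ p = 1 := by
        have := Finset.mem_of_mem_erase hx
        simpa [hS1def] using this
      exact orderOf_eq_prime hxp hx1
    rw [Finset.sum_congr rfl hpe, Finset.sum_const, smul_eq_mul,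
      Finset.card_erase_of_mem h1S1, ← hAcard]
  have hS2dvd : p * p * A ∣ ∑ x ∈ S2, orderOf x := by
    rw [← Finset.sum_fiberwise_of_maps_to (t := S2.image orderOf)
      (fun x hx => Finset.mem_image_of_mem orderOf hx) orderOf]
    refine Finset.dvd_sum ?_
    intro d hd
    obtain ⟨x, hxS2, hxd⟩ := Finset.mem_image.mp hd
    obtain ⟨k, hk⟩ := hord x
    have hxp : ¬ x ^ p = 1 := by simpa [hS2def] using hxS2
    have hk2 : 2 ≤ k := by
      by_contra h
      push_neg at h
      have hdv : orderOf x ∣ p := by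
        rw [hk]
        exact dvd_trans (pow_dvd_pow p (by omega : k ≤ 1)) (by rw [pow_one])
      exact hxp (orderOf_dvd_iff_pow_eq_one.mp hdv)
    have hdpk : d = p ^ k := by rw [← hxd, hk]
    subst hdpk
    have hinner : ∑ y ∈ S2.filter (fun y => orderOf y = p ^ k), orderOf y
        = (S2.filter (fun y => orderOf y = p ^ k)).card * (p ^ k) := by
      rw [Finset.sum_congr rfl (fun y hy => (Finset.mem_filter.mp hy).2),
        Finset.sum_const, smul_eq_mul]
    rw [hinner]
    have hflt : S2.filter (fun y => orderOf y = p ^ k)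
        = univ.filter (fun y : G => orderOf y = p ^ k) := by
      ext y
      simp only [hS2def, Finset.filter_filter, Finset.mem_filter, Finset.mem_univ, true_and]
      constructor
      · rintro ⟨_, h⟩; exact h
      · intro h
        refine ⟨?_, h⟩
        intro hyp
        have hdv : orderOf y ∣ p := orderOf_dvd_iff_pow_eq_one.mpr hyp
        rw [h] at hdv
        have hle := Nat.le_of_dvd hp.pos hdv
        have hlt : p < p ^ k := by
          calc p = p ^ 1 := (pow_one p).symm
          _ < p ^ k := pow_lt_pow_right₀ hp.one_lt (by omega)
        omega
    rw [hflt]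
    -- the count of elements of order exactly p^k
    have hunion : univ.filter (fun y : G => y ^ p ^ k = 1)
        = univ.filter (fun y : G => orderOf y = p ^ k)
          ∪ univ.filter (fun y : G => y ^ p ^ (k - 1) = 1) := by
      ext y
      simp only [Finset.mem_union, Finset.mem_filter, Finset.mem_univ, true_and]
      constructor
      · intro hy
        obtain ⟨j, hj⟩ := hord y
        have hdv : p ^ j ∣ p ^ k := hj ▸ orderOf_dvd_iff_pow_eq_one.mpr hy
        have hjk : j ≤ k := (Nat.pow_dvd_pow_iff_le_right hp.one_lt).mp hdv
        rcases eq_or_lt_of_le hjk with h | h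
        · exact Or.inl (by rw [hj, h])
        · refine Or.inr (orderOf_dvd_iff_pow_eq_one.mp ?_)
          rw [hj]
          exact pow_dvd_pow p (by omega)
      · rintro (hy | hy)
        · exact orderOf_dvd_iff_pow_eq_one.mp (hy ▸ dvd_rfl)
        · refine orderOf_dvd_iff_pow_eq_one.mp
            (dvd_trans (orderOf_dvd_iff_pow_eq_one.mpr hy) (pow_dvd_pow p (by omega)))
    have hdisj : Disjoint (univ.filter (fun y : G => orderOf y = p ^ k))
        (univ.filter (fun y : G => y ^ p ^ (k - 1) = 1)) := by
      rw [Finset.disjoint_left]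
      intro y hy1 hy2
      simp only [Finset.mem_filter, Finset.mem_univ, true_and] at hy1 hy2
      have hdv : p ^ k ∣ p ^ (k - 1) := hy1 ▸ orderOf_dvd_iff_pow_eq_one.mpr hy2
      have := (Nat.pow_dvd_pow_iff_le_right hp.one_lt).mp hdv
      omega
    have hcards : (univ.filter (fun y : G => y ^ p ^ k = 1)).card
        = (univ.filter (fun y : G => orderOf y = p ^ k)).card
          + (univ.filter (fun y : G => y ^ p ^ (k - 1) = 1)).card := by
      rw [hunion, Finset.card_union_of_disjoint hdisj]
    have hAc : A ∣ (univ.filter (fun y : G => orderOf y = p ^ k)).card := by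
      have h1 := hAdvd k (by omega)
      have h2 := hAdvd (k - 1) (by omega)
      have : (univ.filter (fun y : G => orderOf y = p ^ k)).card
          = (univ.filter (fun y : G => y ^ p ^ k = 1)).card
            - (univ.filter (fun y : G => y ^ p ^ (k - 1) = 1)).card := by omega
      rw [this]
      exact Nat.dvd_sub h1 h2
    have hpk : p * p ∣ p ^ k := by
      calc p * p = p ^ 2 := by ring
      _ ∣ p ^ k := pow_dvd_pow p hk2
    have := mul_dvd_mul hpk hAc
    rwa [mul_comm ((univ.filter (fun y : G => orderOf y = p ^ k)).card) (p ^ k)]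
  obtain ⟨M, hM⟩ := hS2dvd
  obtain ⟨A', hA'⟩ : ∃ A', A = A' + 1 := ⟨A - 1, by omega⟩
  refine ⟨M, ?_⟩
  rw [hpsi, hsplit, hS1sum, hM, hA']
  simp only [Nat.add_sub_cancel]
  ring

lemma padic_cancel {p : ℕ} (hp : p.Prime) {a b m m' : ℕ}
    (h : p * p ^ a * (1 + p * m) = p * p ^ b * (1 + p * m')) : a = b := by
  have hu : ∀ n : ℕ, ¬ p ∣ (1 + p * n) := by
    intro n hn
    rw [add_comm] at hn
    have h1 : p ∣ 1 := (Nat.dvd_add_right (dvd_mul_right p n)).mp hn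
    exact absurd (Nat.le_of_dvd one_pos h1) (Nat.not_le.mpr hp.one_lt)
  have hfac : ∀ (c n : ℕ), (p * p ^ c * (1 + p * n)).factorization p = c + 1 := by
    intro c n
    rw [show p * p ^ c = p ^ (c + 1) from (pow_succ' p c).symm,
      Nat.factorization_mul (pow_ne_zero _ hp.pos.ne') (by positivity),
      hp.factorization_pow]
    simp [Nat.factorization_eq_zero_of_not_dvd (hu n)]
  have := (hfac a m).symm.trans (by rw [h, hfac b m'])
  omega

theorem stmt_3 {p : ℕ} (hp : p.Prime) (P Q : Type*) [Group P] [Finite P]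
    [Group Q] [Finite Q] (hPp : IsPGroup p P) (hQp : IsPGroup p Q)
    (hcpP : CP2 P) (hcpQ : CP2 Q) (hcard : Nat.card P = Nat.card Q)
    (hpsi : psi P = psi Q) :
    Nat.card (Omega p P 1) = Nat.card (Omega p Q 1) := by
  classical
  haveI : Fact p.Prime := ⟨hp⟩
  haveI := Fintype.ofFinite P
  haveI := Fintype.ofFinite Q
  obtain ⟨m, hm⟩ := key hp P hPp hcpP
  obtain ⟨m', hm'⟩ := key hp Q hQp hcpQ
  obtain ⟨a, ha⟩ := IsPGroup.iff_card.mp (hPp.to_subgroup (Omega p P 1))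
  obtain ⟨b, hb⟩ := IsPGroup.iff_card.mp (hQp.to_subgroup (Omega p Q 1))
  rw [ha] at hm ⊢
  rw [hb] at hm' ⊢
  rw [hpsi] at hm
  have h : p * p ^ a * (1 + p * m) = p * p ^ b * (1 + p * m') := by omega
  rw [padic_cancel hp h]
end

section
/- Let P be a finite p-group in CP₂. Then for all natural numbers i, Ω_i(P/Ω_1(P)) = Ω_{i+1}(P)/Ω_1(P). -/
lemma omega_pow_eq_one {p : ℕ} (hp : p.Prime) {P : Type*} [Group P] [Finite P]
    (hP : IsPGroup p P) (hcp : CP2 P) (j : ℕ) {x : P} (hx : x ∈ Omega p P j) :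
    x ^ p ^ j = 1 := by
  have hpos : 0 < p ^ j := pow_pos hp.pos j
  have key : ∀ a : P, a ^ p ^ j = 1 ↔ orderOf a ≤ p ^ j := by
    intro a
    constructor
    · intro h
      exact Nat.le_of_dvd hpos (orderOf_dvd_of_pow_eq_one h)
    · intro h
      obtain ⟨k, hk⟩ := hP a
      obtain ⟨m, _, hm⟩ := (Nat.dvd_prime_pow hp).mp (orderOf_dvd_of_pow_eq_one hk)
      apply orderOf_dvd_iff_pow_eq_one.mp
      rw [hm] at h ⊢
      exact pow_dvd_pow p ((Nat.pow_le_pow_iff_right hp.one_lt).mp h)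
  refine Subgroup.closure_induction (fun a ha => ha) (by simp) ?_ ?_ hx
  · intro a b _ _ ha hb
    exact (key _).mpr (le_trans (hcp a b) (max_le ((key a).mp ha) ((key b).mp hb)))
  · intro a _ ha
    rw [inv_pow, ha, inv_one]

theorem stmt_4 {p : ℕ} (hp : p.Prime) (P : Type*) [Group P] [Finite P]
    (hP : IsPGroup p P) (hcp : CP2 P) [(Omega p P 1).Normal] (i : ℕ) :
    Omega p (P ⧸ Omega p P 1) i =
      (Omega p P (i + 1)).map (QuotientGroup.mk' (Omega p P 1)) := by
  apply le_antisymm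
  · apply Subgroup.closure_le _ |>.mpr
    rintro q hq
    obtain ⟨x, rfl⟩ := QuotientGroup.mk'_surjective (Omega p P 1) q
    have h1 : ((QuotientGroup.mk' (Omega p P 1)) x) ^ p ^ i = 1 := hq
    rw [← map_pow] at h1
    have h2 : x ^ p ^ i ∈ Omega p P 1 := (QuotientGroup.eq_one_iff _).mp h1
    have h3 : (x ^ p ^ i) ^ p ^ 1 = 1 := omega_pow_eq_one hp hP hcp 1 h2
    have h4 : x ^ p ^ (i + 1) = 1 := by
      rw [← h3, ← pow_mul, pow_one, pow_succ]
    exact ⟨x, Subgroup.subset_closure h4, rfl⟩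
  · rw [show Omega p P (i+1) = Subgroup.closure {x : P | x ^ p ^ (i+1) = 1} from rfl,
      MonoidHom.map_closure]
    apply Subgroup.closure_le _ |>.mpr
    rintro q ⟨x, hx, rfl⟩
    apply Subgroup.subset_closure
    show ((QuotientGroup.mk' (Omega p P 1)) x) ^ p ^ i = 1
    rw [← map_pow]
    apply (QuotientGroup.eq_one_iff _).mpr
    apply Subgroup.subset_closure
    show (x ^ p ^ i) ^ p ^ 1 = 1
    rw [← pow_mul, pow_one, ← pow_succ]
    exact hx
end

section
/- Let P be a finite p-group in CP₂. Then the quotient P/Ω_1(P) is also in CP₂. -/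
section PGroup

variable {p : ℕ} [hp : Fact p.Prime] {G : Type*} [Group G]

theorem IsPGroup.orderOf_dvd_of_le (hG : IsPGroup p G) {x : G} {k : ℕ}
    (h : orderOf x ≤ p ^ k) : orderOf x ∣ p ^ k := by
  obtain ⟨m, hm⟩ := IsPGroup.iff_orderOf.mp hG x
  rw [hm] at h ⊢
  exact Nat.pow_dvd_pow p ((Nat.pow_le_pow_iff_right hp.out.one_lt).mp h)

theorem IsPGroup.cp2_iff_mul_pow_prime_pow_eq_one (hG : IsPGroup p G) :
    CP2 G ↔ ∀ (k : ℕ) (x y : G), x ^ p ^ k = 1 → y ^ p ^ k = 1 → (x * y) ^ p ^ k = 1 := by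
  have hpos : ∀ k, 0 < p ^ k := fun k => pow_pos hp.out.pos k
  constructor
  · intro hcp k x y hx hy
    have hle : orderOf (x * y) ≤ p ^ k := (hcp x y).trans <|
      max_le (Nat.le_of_dvd (hpos k) (orderOf_dvd_of_pow_eq_one hx))
        (Nat.le_of_dvd (hpos k) (orderOf_dvd_of_pow_eq_one hy))
    exact orderOf_dvd_iff_pow_eq_one.mp (hG.orderOf_dvd_of_le hle)
  · intro hclosed x y
    obtain ⟨i, hi⟩ := IsPGroup.iff_orderOf.mp hG x
    obtain ⟨j, hj⟩ := IsPGroup.iff_orderOf.mp hG y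
    have hmax : max (orderOf x) (orderOf y) = p ^ max i j := by
      rw [hi, hj]
      exact (Monotone.map_max (pow_right_monotone hp.out.one_le)).symm
    have hx : x ^ p ^ max i j = 1 := by
      rw [← orderOf_dvd_iff_pow_eq_one, hi]; exact Nat.pow_dvd_pow p (le_max_left i j)
    have hy : y ^ p ^ max i j = 1 := by
      rw [← orderOf_dvd_iff_pow_eq_one, hj]; exact Nat.pow_dvd_pow p (le_max_right i j)
    rw [hmax]
    exact Nat.le_of_dvd (hpos _) (orderOf_dvd_of_pow_eq_one (hclosed _ x y hx hy))

theorem IsPGroup.mem_Omega_iff (hG : IsPGroup p G) (hcp : CP2 G) {k : ℕ} {x : G} :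
    x ∈ Omega p G k ↔ x ^ p ^ k = 1 := by
  refine ⟨fun hx => ?_, fun hx => Subgroup.subset_closure hx⟩
  induction hx using Subgroup.closure_induction with
  | mem y hy => exact hy
  | one => exact one_pow _
  | mul y z _ _ hy hz => exact (hG.cp2_iff_mul_pow_prime_pow_eq_one.mp hcp) k y z hy hz
  | inv y _ hy => rw [inv_pow, hy, inv_one]

end PGroup

theorem stmt_5_general {p : ℕ} (hp : p.Prime) (P : Type*) [Group P]
    (hP : IsPGroup p P) (hcp : CP2 P) [(Omega p P 1).Normal] :
    CP2 (P ⧸ Omega p P 1) := by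
  have : Fact p.Prime := ⟨hp⟩
  have mk_pow_eq_one : ∀ (x : P) (k : ℕ),
      (x : P ⧸ Omega p P 1) ^ p ^ k = 1 ↔ x ^ p ^ (k + 1) = 1 := fun x k => by
    rw [← QuotientGroup.mk_pow, QuotientGroup.eq_one_iff, hP.mem_Omega_iff hcp, pow_one,
      ← pow_mul, ← pow_succ]
  refine (hP.to_quotient _).cp2_iff_mul_pow_prime_pow_eq_one.mpr fun k x y hx hy => ?_
  obtain ⟨a, rfl⟩ := QuotientGroup.mk_surjective x
  obtain ⟨b, rfl⟩ := QuotientGroup.mk_surjective y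
  rw [mk_pow_eq_one] at hx hy
  rw [← QuotientGroup.mk_mul, mk_pow_eq_one]
  exact (hP.cp2_iff_mul_pow_prime_pow_eq_one.mp hcp) (k + 1) a b hx hy

theorem stmt_5 {p : ℕ} (hp : p.Prime) (P : Type*) [Group P] [Finite P]
    (hP : IsPGroup p P) (hcp : CP2 P) [(Omega p P 1).Normal] :
    CP2 (P ⧸ Omega p P 1) :=
  stmt_5_general hp P hP hcp
end

section
/- Let P and Q be finite abelian p-groups of the same order. Then ψ(P) = ψ(Q) if and only if P ≅ Q. -/
open Finset

noncomputable def rootCount (G : Type*) [Group G] (n : ℕ) : ℕ := Nat.card {x : G // x ^ n = 1}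

section RootCount

variable {G H : Type*} [Group G] [Group H]

lemma rootCount_congr (e : G ≃* H) (n : ℕ) : rootCount G n = rootCount H n :=
  Nat.card_congr <| e.toEquiv.subtypeEquiv fun x => by simp [← map_pow]

lemma rootCount_le_of_dvd [Finite G] {m n : ℕ} (h : m ∣ n) : rootCount G m ≤ rootCount G n := by
  obtain ⟨k, rfl⟩ := h
  exact Nat.card_le_card_of_injective _
    (Subtype.impEmbedding _ _ fun x hx => by rw [pow_mul, hx, one_pow]).injective

lemma rootCount_pi {ι : Type*} [Fintype ι] (M : ι → Type*) [∀ i, Group (M i)] (n : ℕ) :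
    rootCount (∀ i, M i) n = ∏ i, rootCount (M i) n := by
  have e : {x : ∀ i, M i // x ^ n = 1} ≃ ∀ i, {y : M i // y ^ n = 1} :=
    (Equiv.subtypeEquivRight fun _ => funext_iff).trans
      (Equiv.subtypePiEquivPi (p := fun i (y : M i) => y ^ n = 1))
  rw [rootCount, Nat.card_congr e, Nat.card_pi]
  rfl

end RootCount

lemma rootCount_eq_card_ker {G : Type*} [CommGroup G] (n : ℕ) :
    rootCount G n = Nat.card (powMonoidHom n : G →* G).ker :=
  rfl

lemma rootCount_multiplicative_zmod (n d : ℕ) [NeZero n] :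
    rootCount (Multiplicative (ZMod n)) d = n.gcd d := by
  rw [rootCount_eq_card_ker, IsCyclic.card_powMonoidHom_ker, Nat.card_congr Multiplicative.toAdd,
    Nat.card_zmod]

lemma rootCount_pi_zmod_prime_pow {p : ℕ} (hp : p.Prime) {ι : Type*} [Fintype ι] (e : ι → ℕ)
    (j : ℕ) : rootCount (∀ i, Multiplicative (ZMod (p ^ e i))) (p ^ j) = p ^ ∑ i, min (e i) j := by
  have : ∀ i, NeZero (p ^ e i) := fun i => ⟨pow_ne_zero _ hp.ne_zero⟩
  rw [rootCount_pi, ← prod_pow_eq_pow_sum]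
  refine prod_congr rfl fun i _ => ?_
  rw [rootCount_multiplicative_zmod]
  rcases le_total (e i) j with h | h
  · rw [min_eq_left h, Nat.gcd_eq_left (pow_dvd_pow p h)]
  · rw [min_eq_right h, Nat.gcd_eq_right (pow_dvd_pow p h)]

lemma IsPGroup.exists_rootCount_eq_pow {p : ℕ} [Fact p.Prime] {G : Type*} [CommGroup G] [Finite G]
    (hG : IsPGroup p G) (n : ℕ) : ∃ k, rootCount G n = p ^ k := by
  rw [rootCount_eq_card_ker]
  exact IsPGroup.iff_card.mp (hG.to_subgroup _)

lemma pow_add_sub_one_mul_sum_Ico {p k N : ℕ} (hp : 1 ≤ p) (hkN : k ≤ N) :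
    p ^ k + (p - 1) * ∑ j ∈ Ico k N, p ^ j = p ^ N := by
  have h := geom_sum_Ico_mul (p : ℤ) hkN
  zify [hp]
  linarith

lemma eq_of_sum_range_pow_eq {p N : ℕ} (hp : 2 ≤ p) {d d' : ℕ → ℕ} (hd : StrictMono d)
    (hd' : StrictMono d') (h : ∑ j ∈ range N, p ^ d j = ∑ j ∈ range N, p ^ d' j) {j : ℕ}
    (hj : j < N) : d j = d' j := by
  have himage : (range N).image d = (range N).image d' := by
    refine geomSum_injective hp ?_
    simpa only [sum_image hd.injective.injOn, sum_image hd'.injective.injOn] using h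
  have hrange (f : ℕ → ℕ) : Set.range (f ∘ Fin.val (n := N)) = (range N).image f := by
    ext
    simp [Fin.exists_iff]
  exact congrFun ((hd.comp Fin.val_strictMono).range_inj (hd'.comp Fin.val_strictMono) |>.mp
    (by rw [hrange, hrange, himage])) ⟨j, hj⟩

section Psi

variable {G H : Type*} [Group G] [Group H] {p N : ℕ}

lemma orderOf_add_sub_one_mul_sum [DecidableEq G] (hp : p.Prime) {x : G} (hx : x ^ p ^ N = 1) :
    orderOf x + (p - 1) * ∑ j ∈ range N, (if x ^ p ^ j = 1 then p ^ j else 0) = p ^ N := by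
  obtain ⟨k, hkN, hk⟩ := (Nat.dvd_prime_pow hp).mp (orderOf_dvd_of_pow_eq_one hx)
  have hfilter : (range N).filter (fun j => x ^ p ^ j = 1) = Ico k N := by
    ext j
    rw [mem_filter, mem_range, mem_Ico, ← orderOf_dvd_iff_pow_eq_one, hk,
      Nat.pow_dvd_pow_iff_le_right hp.one_lt]
    omega
  rw [← sum_filter, hfilter, hk]
  exact pow_add_sub_one_mul_sum_Ico hp.one_lt.le hkN

lemma psi_add_sub_one_mul_sum_rootCount [Finite G] (hp : p.Prime) (hG : ∀ x : G, x ^ p ^ N = 1) :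
    psi G + (p - 1) * ∑ j ∈ range N, p ^ j * rootCount G (p ^ j) = Nat.card G * p ^ N := by
  classical
  have := Fintype.ofFinite G
  have hcount (j : ℕ) :
      ∑ x : G, (if x ^ p ^ j = 1 then p ^ j else 0) = p ^ j * rootCount G (p ^ j) := by
    rw [sum_ite, sum_const_zero, add_zero, sum_const, smul_eq_mul, mul_comm, rootCount,
      Nat.card_eq_fintype_card, Fintype.card_subtype]
  calc psi G + (p - 1) * ∑ j ∈ range N, p ^ j * rootCount G (p ^ j)
      = ∑ x : G, (orderOf x + (p - 1) * ∑ j ∈ range N, (if x ^ p ^ j = 1 then p ^ j else 0)) := by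
        rw [sum_add_distrib, ← mul_sum, sum_comm, psi, finsum_eq_sum_of_fintype]
        simp only [hcount]
    _ = ∑ _ : G, p ^ N := sum_congr rfl fun x _ => orderOf_add_sub_one_mul_sum hp (hG x)
    _ = Nat.card G * p ^ N := by rw [sum_const, card_univ, smul_eq_mul, Nat.card_eq_fintype_card]

lemma sum_rootCount_eq_of_psi_eq [Finite G] [Finite H] (hp : p.Prime)
    (hG : ∀ x : G, x ^ p ^ N = 1) (hH : ∀ x : H, x ^ p ^ N = 1) (hcard : Nat.card G = Nat.card H)
    (hpsi : psi G = psi H) :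
    ∑ j ∈ range N, p ^ j * rootCount G (p ^ j) = ∑ j ∈ range N, p ^ j * rootCount H (p ^ j) := by
  have hGH := (psi_add_sub_one_mul_sum_rootCount hp hG).trans
    (hcard ▸ (psi_add_sub_one_mul_sum_rootCount hp hH).symm)
  rw [hpsi, add_right_inj] at hGH
  exact Nat.eq_of_mul_eq_mul_left (Nat.sub_pos_of_lt hp.one_lt) hGH

lemma psi_congr [Finite G] [Finite H] (e : G ≃* H) : psi G = psi H := by
  have := Fintype.ofFinite G
  have := Fintype.ofFinite H
  rw [psi, psi, finsum_eq_sum_of_fintype, finsum_eq_sum_of_fintype]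
  exact Fintype.sum_equiv e.toEquiv _ _ fun x => (MulEquiv.orderOf_eq e x).symm

end Psi

lemma exists_strictMono_pow_mul_rootCount {p : ℕ} [Fact p.Prime] {G : Type*} [CommGroup G]
    [Finite G] (hG : IsPGroup p G) :
    ∃ d : ℕ → ℕ, StrictMono d ∧ ∀ j, p ^ j * rootCount G (p ^ j) = p ^ d j := by
  choose a ha using fun j => hG.exists_rootCount_eq_pow (p ^ j)
  have hp := (Fact.out : p.Prime).one_lt
  refine ⟨fun j => j + a j, strictMono_nat_of_lt_succ fun j => ?_, fun j => by rw [ha, pow_add]⟩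
  have h := rootCount_le_of_dvd (G := G) (pow_dvd_pow p (j.le_add_right 1))
  rw [ha, ha, Nat.pow_le_pow_iff_right hp] at h
  omega

theorem rootCount_eq_of_psi_eq {p : ℕ} (hp : p.Prime) {G H : Type*} [CommGroup G] [Finite G]
    [CommGroup H] [Finite H] (hG : IsPGroup p G) (hH : IsPGroup p H)
    (hcard : Nat.card G = Nat.card H) (hpsi : psi G = psi H) (j : ℕ) :
    rootCount G (p ^ j) = rootCount H (p ^ j) := by
  have := Fact.mk hp
  obtain ⟨m, hm⟩ := IsPGroup.iff_card.mp hG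
  set N := max m (j + 1)
  have hdvd : p ^ m ∣ p ^ N := pow_dvd_pow p (le_max_left _ _)
  have hGexp (x : G) : x ^ p ^ N = 1 :=
    orderOf_dvd_iff_pow_eq_one.mp ((orderOf_dvd_natCard x).trans (hm ▸ hdvd))
  have hHexp (x : H) : x ^ p ^ N = 1 :=
    orderOf_dvd_iff_pow_eq_one.mp ((orderOf_dvd_natCard x).trans (hcard ▸ hm ▸ hdvd))
  obtain ⟨d, hd, hdG⟩ := exists_strictMono_pow_mul_rootCount hG
  obtain ⟨d', hd', hdH⟩ := exists_strictMono_pow_mul_rootCount hH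
  have hsum := sum_rootCount_eq_of_psi_eq hp hGexp hHexp hcard hpsi
  simp only [hdG, hdH] at hsum
  have hdj := eq_of_sum_range_pow_eq hp.two_le hd hd' hsum (lt_max_of_lt_right j.lt_succ_self)
  exact Nat.eq_of_mul_eq_mul_left (pow_pos hp.pos j) (by rw [hdG, hdH, hdj])

lemma sum_min_succ {ι : Type*} (s : Finset ι) (e : ι → ℕ) (k : ℕ) :
    ∑ i ∈ s, min (e i) (k + 1) = ∑ i ∈ s, min (e i) k + #{i ∈ s | k < e i} := by
  rw [card_filter, ← sum_add_distrib]
  exact sum_congr rfl fun i _ => by split_ifs <;> omega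

lemma card_filter_lt_eq_card_filter_eq_add {ι : Type*} (s : Finset ι) (e : ι → ℕ) (k : ℕ) :
    #{i ∈ s | k < e i} = #{i ∈ s | e i = k + 1} + #{i ∈ s | k + 1 < e i} := by
  rw [card_filter, card_filter, card_filter, ← sum_add_distrib]
  exact sum_congr rfl fun i _ => by split_ifs <;> omega

lemma exists_equiv_of_sum_min_eq {ι ι' : Type*} [Fintype ι] [Fintype ι'] {e : ι → ℕ} {e' : ι' → ℕ}
    (h : ∀ j, ∑ i, min (e i) j = ∑ i, min (e' i) j) (he : ∀ i, 0 < e i) (he' : ∀ i, 0 < e' i) :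
    ∃ σ : ι ≃ ι', ∀ i, e' (σ i) = e i := by
  classical
  have hlt (k : ℕ) : #{i | k < e i} = #{i | k < e' i} := by
    have := h (k + 1)
    rw [sum_min_succ, sum_min_succ, h k] at this
    omega
  have hfiber (k : ℕ) : #{i | e i = k} = #{i | e' i = k} := by
    cases k with
    | zero =>
      rw [filter_false_of_mem fun i _ => (he i).ne', filter_false_of_mem fun i _ => (he' i).ne',
        card_empty, card_empty]
    | succ k =>
      have := card_filter_lt_eq_card_filter_eq_add univ e k
      have := card_filter_lt_eq_card_filter_eq_add univ e' k
      have := hlt k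
      have := hlt (k + 1)
      omega
  let τ (k : ℕ) : {i // e i = k} ≃ {i // e' i = k} :=
    Fintype.equivOfCardEq (by rw [Fintype.card_subtype, Fintype.card_subtype, hfiber])
  exact ⟨Equiv.ofFiberEquiv τ, Equiv.ofFiberEquiv_map τ⟩

def MulEquiv.piCongrLeft' {ι ι' : Type*} (M : ι → Type*) [∀ i, Mul (M i)] (σ : ι ≃ ι') :
    ((i : ι) → M i) ≃* ((i' : ι') → M (σ.symm i')) where
  toEquiv := Equiv.piCongrLeft' M σ
  map_mul' _ _ := rfl

lemma IsPGroup.exists_mulEquiv_pi_zmod {p : ℕ} [Fact p.Prime] {G : Type*} [CommGroup G] [Finite G]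
    (hG : IsPGroup p G) :
    ∃ (ι : Type) (_ : Fintype ι) (e : ι → ℕ), (∀ i, 0 < e i) ∧
      Nonempty (G ≃* ((i : ι) → Multiplicative (ZMod (p ^ e i)))) := by
  obtain ⟨ι, _, n, hn, ⟨φ⟩⟩ := CommGroup.equiv_prod_multiplicative_zmod_of_finite G
  have hpow (i : ι) : ∃ k, n i = p ^ k := by
    have : NeZero (n i) := ⟨by linarith [hn i]⟩
    have hi := (hG.of_equiv φ).of_surjective (Pi.evalMonoidHom _ i)
      (Function.surjective_eval i)
    rw [← Nat.card_zmod (n i), ← Nat.card_congr Multiplicative.toAdd]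
    exact IsPGroup.iff_card.mp hi
  choose k hk using hpow
  obtain rfl : n = fun i => p ^ k i := funext hk
  refine ⟨ι, ‹_›, k, fun i => Nat.pos_of_ne_zero fun h0 => ?_, ⟨φ⟩⟩
  simpa [h0] using hn i

theorem nonempty_mulEquiv_of_rootCount_eq {p : ℕ} (hp : p.Prime) {G H : Type*} [CommGroup G]
    [Finite G] [CommGroup H] [Finite H] (hG : IsPGroup p G) (hH : IsPGroup p H)
    (h : ∀ j, rootCount G (p ^ j) = rootCount H (p ^ j)) : Nonempty (G ≃* H) := by
  have := Fact.mk hp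
  obtain ⟨ι, _, e, he, ⟨φ⟩⟩ := hG.exists_mulEquiv_pi_zmod
  obtain ⟨ι', _, e', he', ⟨ψ⟩⟩ := hH.exists_mulEquiv_pi_zmod
  have hsum (j : ℕ) : ∑ i, min (e i) j = ∑ i, min (e' i) j := by
    have := h j
    rw [rootCount_congr φ, rootCount_congr ψ, rootCount_pi_zmod_prime_pow hp,
      rootCount_pi_zmod_prime_pow hp] at this
    exact Nat.pow_right_injective hp.two_le this
  obtain ⟨σ, hσ⟩ := exists_equiv_of_sum_min_eq hsum he he'
  obtain rfl : e = e' ∘ σ := funext fun i => (hσ i).symm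
  exact ⟨φ.trans ((MulEquiv.piCongrLeft' _ σ.symm).symm.trans ψ.symm)⟩

theorem stmt_7 {p : ℕ} (hp : p.Prime) (P Q : Type*) [CommGroup P] [Finite P]
    [CommGroup Q] [Finite Q] (hPp : IsPGroup p P) (hQp : IsPGroup p Q)
    (hcard : Nat.card P = Nat.card Q) :
    psi P = psi Q ↔ Nonempty (P ≃* Q) := by
  refine ⟨fun hpsi => ?_, fun ⟨e⟩ => psi_congr e⟩
  exact nonempty_mulEquiv_of_rootCount_eq hp hPp hQp (rootCount_eq_of_psi_eq hp hPp hQp hcard hpsi)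
end

section
/- Let P and Q be finite p-groups in CP₂ of the same order p^n. If |Ω_i(P)| = |Ω_i(Q)| for all natural numbers i, then ψ(P) = ψ(Q). -/
open Finset

lemma Nat.sum_range_ite_le_eq_pow_sub_one {p k N : ℕ} (hp : 1 ≤ p) (hk : k ≤ N) :
    ∑ j ∈ range N, (if k ≤ j then 0 else p ^ (j + 1) - p ^ j) = p ^ k - 1 := by
  have hfilter : (range N).filter (fun j => ¬k ≤ j) = range k := by
    ext j; simp only [mem_filter, mem_range]; omega
  rw [sum_ite, sum_const_zero, zero_add, hfilter,
    sum_range_tsub (pow_right_mono₀ hp), pow_zero]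

section

variable {p : ℕ} {G : Type*} [Group G]

lemma IsPGroup.pow_prime_pow_eq_one_iff_orderOf_le (hp : p.Prime) (hG : IsPGroup p G)
    (x : G) (j : ℕ) : x ^ p ^ j = 1 ↔ orderOf x ≤ p ^ j := by
  have := Fact.mk hp
  obtain ⟨k, hk⟩ := (IsPGroup.iff_orderOf.mp hG) x
  rw [← orderOf_dvd_iff_pow_eq_one, hk, Nat.pow_dvd_pow_iff_le_right hp.one_lt,
    Nat.pow_le_pow_iff_right hp.one_lt]

lemma orderOf_eq_one_add_sum_range [DecidableEq G] (hp : p.Prime) (hG : IsPGroup p G)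
    {x : G} {N : ℕ} (hx : x ^ p ^ N = 1) :
    orderOf x = 1 + ∑ j ∈ range N, (if x ^ p ^ j = 1 then 0 else p ^ (j + 1) - p ^ j) := by
  have := Fact.mk hp
  obtain ⟨k, hk⟩ := (IsPGroup.iff_orderOf.mp hG) x
  have hdvd : ∀ j, x ^ p ^ j = 1 ↔ k ≤ j := fun j => by
    rw [← orderOf_dvd_iff_pow_eq_one, hk, Nat.pow_dvd_pow_iff_le_right hp.one_lt]
  simp only [hdvd] at hx ⊢
  rw [Nat.sum_range_ite_le_eq_pow_sub_one hp.one_le hx, hk]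
  have := Nat.one_le_pow k p hp.pos
  omega

lemma CP2.coe_Omega (hp : p.Prime) (hG : IsPGroup p G) (hcp : CP2 G) (j : ℕ) :
    (Omega p G j : Set G) = {x : G | x ^ p ^ j = 1} := by
  have hmul {x y : G} (hx : x ^ p ^ j = 1) (hy : y ^ p ^ j = 1) : (x * y) ^ p ^ j = 1 := by
    simp only [hG.pow_prime_pow_eq_one_iff_orderOf_le hp] at hx hy ⊢
    exact (hcp x y).trans (max_le hx hy)
  refine subset_antisymm (fun x hx => ?_) Subgroup.subset_closure
  induction hx using Subgroup.closure_induction with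
  | mem x hx => exact hx
  | one => exact one_pow _
  | mul x y _ _ hx hy => exact hmul hx hy
  | inv x _ hx => exact (inv_pow x _).trans (by rw [Set.mem_ofPred_eq.mp hx, inv_one])

lemma Omega_eq_top {N : ℕ} (hN : ∀ x : G, x ^ p ^ N = 1) : Omega p G N = ⊤ := by
  have hall : {x : G | x ^ p ^ N = 1} = Set.univ := Set.eq_univ_of_forall hN
  rw [Omega, hall, Subgroup.closure_univ]

lemma CP2.card_filter_pow_ne_one [Fintype G] [DecidableEq G] (hp : p.Prime) (hG : IsPGroup p G)
    (hcp : CP2 G) (j : ℕ) :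
    #{x : G | ¬x ^ p ^ j = 1} = Nat.card G - Nat.card (Omega p G j) := by
  rw [← Fintype.card_subtype, Fintype.card_subtype_compl, Nat.card_eq_fintype_card,
    ← SetLike.coe_sort_coe, CP2.coe_Omega hp hG hcp, Nat.card_eq_fintype_card]
  rfl

lemma CP2.psi_eq (hp : p.Prime) (hG : IsPGroup p G) (hcp : CP2 G) [Finite G] {N : ℕ}
    (hN : ∀ x : G, x ^ p ^ N = 1) :
    psi G = Nat.card G + ∑ j ∈ range N,
      (p ^ (j + 1) - p ^ j) * (Nat.card G - Nat.card (Omega p G j)) := by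
  classical
  have := Fintype.ofFinite G
  calc psi G = ∑ x : G, orderOf x := finsum_eq_sum_of_fintype _
    _ = ∑ x : G, (1 + ∑ j ∈ range N, (if x ^ p ^ j = 1 then 0 else p ^ (j + 1) - p ^ j)) :=
        sum_congr rfl fun x _ => orderOf_eq_one_add_sum_range hp hG (hN x)
    _ = Nat.card G + ∑ j ∈ range N,
          (p ^ (j + 1) - p ^ j) * #{x : G | ¬x ^ p ^ j = 1} := by
        rw [sum_add_distrib, sum_comm, sum_const, card_univ, smul_eq_mul, mul_one,
          Nat.card_eq_fintype_card]
        refine congrArg _ (sum_congr rfl fun j _ => ?_)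
        rw [sum_ite, sum_const_zero, zero_add, sum_const, smul_eq_mul, mul_comm]
    _ = _ := by simp only [CP2.card_filter_pow_ne_one hp hG hcp]

end

theorem stmt_9_general {p : ℕ} (hp : p.Prime) (P Q : Type*) [Group P] [Finite P]
    [Group Q] [Finite Q] (hPp : IsPGroup p P) (hQp : IsPGroup p Q)
    (hcpP : CP2 P) (hcpQ : CP2 Q)
    (hcards : ∀ i : ℕ, Nat.card (Omega p P i) = Nat.card (Omega p Q i)) :
    psi P = psi Q := by
  obtain ⟨a, ha⟩ := isPGroup_iff_exists_pow_pow_eq_one.mp hPp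
  obtain ⟨b, hb⟩ := isPGroup_iff_exists_pow_pow_eq_one.mp hQp
  have hP : ∀ x : P, x ^ p ^ (a + b) = 1 := fun x => by rw [pow_add, pow_mul, ha, one_pow]
  have hQ : ∀ x : Q, x ^ p ^ (a + b) = 1 := fun x => by rw [pow_add, pow_mul', hb, one_pow]
  have hcard : Nat.card P = Nat.card Q := by
    rw [← Subgroup.card_top, ← Omega_eq_top hP, hcards, Omega_eq_top hQ, Subgroup.card_top]
  rw [hcpP.psi_eq hp hPp hP, hcpQ.psi_eq hp hQp hQ, hcard]
  simp only [hcards]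

theorem stmt_9 {p n : ℕ} (hp : p.Prime) (P Q : Type*) [Group P] [Finite P]
    [Group Q] [Finite Q] (hPp : IsPGroup p P) (hQp : IsPGroup p Q)
    (hcpP : CP2 P) (hcpQ : CP2 Q)
    (hcardP : Nat.card P = p ^ n) (hcardQ : Nat.card Q = p ^ n)
    (hcards : ∀ i : ℕ, Nat.card (Omega p P i) = Nat.card (Omega p Q i)) :
    psi P = psi Q :=
  stmt_9_general hp P Q hPp hQp hcpP hcpQ hcards
end

section
/- Let P and Q be finite p-groups in CP₂ of the same order p^n. If ψ(Ω_i(P)) = ψ(Ω_i(Q)) for all natural numbers i, then |Ω_i(P)| = |Ω_i(Q)| for all natural numbers i. -/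
section aux

open Finset

variable {p : ℕ} {G : Type*} [Group G]

lemma aux_mem_Omega (hp : p.Prime) (hGp : IsPGroup p G) (hcp : CP2 G) (i : ℕ) (x : G) :
    x ∈ Omega p G i ↔ x ^ p ^ i = 1 := by
  haveI : Fact p.Prime := ⟨hp⟩
  have key : ∀ y : G, orderOf y ≤ p ^ i → y ^ p ^ i = 1 := by
    intro y hy
    obtain ⟨k, hk⟩ := IsPGroup.iff_orderOf.mp hGp y
    rw [hk] at hy
    have : k ≤ i := (pow_le_pow_iff_right₀ hp.one_lt).mp hy
    exact orderOf_dvd_iff_pow_eq_one.mp (hk ▸ pow_dvd_pow p this)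
  let H : Subgroup G :=
    { carrier := {x : G | x ^ p ^ i = 1}
      one_mem' := one_pow _
      inv_mem' := by
        intro a ha
        simp only [Set.mem_setOf_eq] at ha ⊢
        rw [inv_pow, ha, inv_one]
      mul_mem' := by
        intro a b ha hb
        simp only [Set.mem_setOf_eq] at ha hb ⊢
        have ha' : orderOf a ≤ p ^ i :=
          Nat.le_of_dvd (pow_pos hp.pos i) (orderOf_dvd_of_pow_eq_one ha)
        have hb' : orderOf b ≤ p ^ i :=
          Nat.le_of_dvd (pow_pos hp.pos i) (orderOf_dvd_of_pow_eq_one hb)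
        exact key _ ((hcp a b).trans (max_le ha' hb')) }
  have : Omega p G i = H := Subgroup.closure_eq H
  rw [this]; rfl

lemma aux_pow_iff (hp : p.Prime) (hGp : IsPGroup p G) (i : ℕ) (x : G) :
    x ^ p ^ (i + 1) = 1 ↔ (x ^ p ^ i = 1 ∨ orderOf x = p ^ (i + 1)) := by
  haveI : Fact p.Prime := ⟨hp⟩
  constructor
  · intro h
    obtain ⟨k, hk⟩ := IsPGroup.iff_orderOf.mp hGp x
    have hki : k ≤ i + 1 := by
      have := orderOf_dvd_of_pow_eq_one h
      rw [hk] at this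
      exact (Nat.pow_dvd_pow_iff_le_right hp.one_lt).mp this
    rcases Nat.lt_or_ge k (i+1) with hlt | hge
    · left
      exact orderOf_dvd_iff_pow_eq_one.mp (hk ▸ pow_dvd_pow p (Nat.lt_succ_iff.mp hlt))
    · right; rw [hk, le_antisymm hki hge]
  · rintro (h | h)
    · exact orderOf_dvd_iff_pow_eq_one.mp
        ((orderOf_dvd_of_pow_eq_one h).trans (pow_dvd_pow p (Nat.le_succ i)))
    · exact orderOf_dvd_iff_pow_eq_one.mp (h ▸ dvd_rfl)

variable [Fintype G]

open Classical in
noncomputable def Ffun (p : ℕ) (G : Type*) [Group G] [Fintype G] (i : ℕ) : ℕ :=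
  ∑ x ∈ univ.filter (fun x : G => x ^ p ^ i = 1), orderOf x

open Classical in
noncomputable def Nfun (p : ℕ) (G : Type*) [Group G] [Fintype G] (i : ℕ) : ℕ :=
  (univ.filter (fun x : G => x ^ p ^ i = 1)).card

open Classical in
noncomputable def afun (p : ℕ) (G : Type*) [Group G] [Fintype G] (i : ℕ) : ℕ :=
  (univ.filter (fun x : G => orderOf x = p ^ i)).card

open Classical in
lemma aux_filter_succ (hp : p.Prime) (hGp : IsPGroup p G) (i : ℕ) :
    univ.filter (fun x : G => x ^ p ^ (i+1) = 1) =
      univ.filter (fun x : G => x ^ p ^ i = 1) ∪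
        univ.filter (fun x : G => orderOf x = p ^ (i+1)) := by
  rw [← filter_or]
  exact filter_congr fun x _ => aux_pow_iff hp hGp i x

open Classical in
lemma aux_disj (hp : p.Prime) (i : ℕ) :
    Disjoint (univ.filter (fun x : G => x ^ p ^ i = 1))
      (univ.filter (fun x : G => orderOf x = p ^ (i+1))) := by
  rw [disjoint_filter]
  intro x _ hx hord
  have := orderOf_dvd_of_pow_eq_one hx
  rw [hord] at this
  have := Nat.le_of_dvd (pow_pos hp.pos i) this
  exact absurd this (not_le.mpr (pow_lt_pow_right₀ hp.one_lt (Nat.lt_succ_self i)))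

lemma aux_F_succ (hp : p.Prime) (hGp : IsPGroup p G) (i : ℕ) :
    Ffun p G (i+1) = Ffun p G i + p ^ (i+1) * afun p G (i+1) := by
  classical
  unfold Ffun afun
  rw [aux_filter_succ hp hGp i, Finset.sum_union (aux_disj hp i)]
  congr 1
  rw [Finset.sum_congr rfl (fun x hx => (Finset.mem_filter.mp hx).2),
    Finset.sum_const, smul_eq_mul, mul_comm]

lemma aux_N_succ (hp : p.Prime) (hGp : IsPGroup p G) (i : ℕ) :
    Nfun p G (i+1) = Nfun p G i + afun p G (i+1) := by
  classical
  unfold Nfun afun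
  rw [aux_filter_succ hp hGp i, Finset.card_union_of_disjoint (aux_disj hp i)]

lemma aux_N_zero : Nfun p G 0 = 1 := by
  classical
  unfold Nfun
  rw [Finset.card_eq_one]
  exact ⟨1, by ext x; simp⟩

lemma aux_psi_eq (hp : p.Prime) (hGp : IsPGroup p G) (hcp : CP2 G) (i : ℕ) :
    psi (Omega p G i) = Ffun p G i := by
  classical
  unfold psi Ffun
  rw [finsum_eq_sum_of_fintype]
  simp_rw [← Subgroup.orderOf_coe]
  rw [← Finset.sum_subtype (univ.filter (fun x : G => x ^ p ^ i = 1))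
    (fun x => by simp [aux_mem_Omega hp hGp hcp i x]) (fun x : G => orderOf x)]

lemma aux_card_eq (hp : p.Prime) (hGp : IsPGroup p G) (hcp : CP2 G) (i : ℕ) :
    Nat.card (Omega p G i) = Nfun p G i := by
  classical
  unfold Nfun
  rw [Nat.card_eq_fintype_card, Fintype.card_subtype]
  exact congrArg Finset.card (Finset.filter_congr fun x _ => by
    simp [aux_mem_Omega hp hGp hcp i x])

end aux

theorem stmt_11 {p n : ℕ} (hp : p.Prime) (P Q : Type*) [Group P] [Finite P]
    [Group Q] [Finite Q] (hPp : IsPGroup p P) (hQp : IsPGroup p Q)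
    (hcpP : CP2 P) (hcpQ : CP2 Q)
    (hcardP : Nat.card P = p ^ n) (hcardQ : Nat.card Q = p ^ n)
    (hpsis : ∀ i : ℕ, psi (Omega p P i) = psi (Omega p Q i)) :
    ∀ i : ℕ, Nat.card (Omega p P i) = Nat.card (Omega p Q i) := by
  haveI : Fintype P := Fintype.ofFinite P
  haveI : Fintype Q := Fintype.ofFinite Q
  have hF : ∀ i, Ffun p P i = Ffun p Q i := fun i => by
    rw [← aux_psi_eq hp hPp hcpP i, ← aux_psi_eq hp hQp hcpQ i]
    exact hpsis i
  have hN : ∀ i, Nfun p P i = Nfun p Q i := by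
    intro i
    induction i with
    | zero => rw [aux_N_zero, aux_N_zero]
    | succ i ih =>
      have ha : afun p P (i+1) = afun p Q (i+1) := by
        have h1 := aux_F_succ hp hPp i
        have h2 := aux_F_succ hp hQp i
        rw [hF (i+1), hF i] at h1
        rw [h1] at h2
        have := Nat.add_left_cancel h2
        exact Nat.eq_of_mul_eq_mul_left (pow_pos hp.pos (i+1)) this
      rw [aux_N_succ hp hPp i, aux_N_succ hp hQp i, ih, ha]
  intro i
  rw [aux_card_eq hp hPp hcpP i, aux_card_eq hp hQp hcpQ i]
  exact hN i
end

section
/- Let P and Q be finite p-groups in CP₂ of the same order p^n. Then ψ(P) = ψ(Q) if and only if there is a bijection f : P → Q with o(f(x)) = o(x) for all x ∈ P. -/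
/-!
In a `CP₂` `p`-group the elements with `x ^ p ^ i = 1` form a subgroup, namely `Ω_i`, so `|Ω_i|`
is a power of `p`. Counting `o(x) = p^n - (p - 1) ∑_{o(x) ≤ p^i < p^n} p^i` over `G` gives
`ψ(G) + (p - 1) ∑_{i<n} |Ω_i| p^i = p^(2n)`. As `Ω_i ≤ Ω_(i+1)`, the terms `|Ω_i| p^i` are powers
of `p` with strictly increasing exponents, so by uniqueness of base-`p` expansions `ψ(G)`
determines every `|Ω_i|`, hence the number `|Ω_k| - |Ω_(k-1)|` of elements of each order `p^k`.
-/

open Finset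

lemma pow_add_sub_one_mul_sum_Ico_pow {p k n : ℕ} (hp : 1 ≤ p) (hkn : k ≤ n) :
    p ^ k + (p - 1) * ∑ i ∈ Ico k n, p ^ i = p ^ n := by
  zify [hp]
  linear_combination geom_sum_Ico_mul (p : ℤ) hkn

theorem StrictMono.eq_of_sum_pow_eq {b n : ℕ} (hb : 2 ≤ b) {e e' : Fin n → ℕ}
    (he : StrictMono e) (he' : StrictMono e') (h : ∑ i, b ^ e i = ∑ i, b ^ e' i) :
    e = e' := by
  have himage : univ.image e = univ.image e' := by
    apply geomSum_injective hb
    simpa only [sum_image fun i _ j _ hij => he.injective hij,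
      sum_image fun i _ j _ hij => he'.injective hij] using h
  rw [← he.range_inj he', ← Set.image_univ, ← Set.image_univ, ← coe_univ, ← coe_image,
    ← coe_image, himage]

section Counting

variable {α : Type*} [Fintype α]

lemma sum_pow_add_sub_one_mul_sum_card_le {p n : ℕ} (hp : 1 ≤ p) (ν : α → ℕ)
    (hν : ∀ a, ν a ≤ n) :
    ∑ a, p ^ ν a + (p - 1) * ∑ i ∈ range n, #{a | ν a ≤ i} * p ^ i
      = Fintype.card α * p ^ n := by
  have hIco : ∀ a, {i ∈ range n | ν a ≤ i} = Ico (ν a) n := fun a => by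
    ext i; simp only [mem_filter, mem_range, mem_Ico]; omega
  have hswap : ∑ i ∈ range n, #{a | ν a ≤ i} * p ^ i = ∑ a, ∑ i ∈ Ico (ν a) n, p ^ i := by
    simp only [card_filter, sum_mul, ite_mul, one_mul, zero_mul]
    rw [sum_comm]
    simp only [← sum_filter, hIco]
  rw [hswap, mul_sum, ← sum_add_distrib, ← smul_eq_mul, ← card_univ, ← sum_const]
  exact sum_congr rfl fun a _ => pow_add_sub_one_mul_sum_Ico_pow hp (hν a)

lemma card_filter_lt_add_card_filter_eq (f : α → ℕ) (k : ℕ) :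
    #{a | f a < k} + #{a | f a = k} = #{a | f a ≤ k} := by
  classical
  rw [← card_union_of_disjoint (disjoint_filter.2 fun _ _ h => h.ne), ← filter_or]
  simp only [le_iff_lt_or_eq]

theorem exists_equiv_apply_eq_of_card_le_eq {β : Type*} [Fintype β] (f : α → ℕ) (g : β → ℕ)
    (h : ∀ k, #{a | f a ≤ k} = #{b | g b ≤ k}) : ∃ e : α ≃ β, ∀ a, g (e a) = f a := by
  have hlt : ∀ k, #{a | f a < k} = #{b | g b < k} := by
    rintro (_ | k)
    · simp
    · simpa only [Nat.lt_succ_iff] using h k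
  have hfiber : ∀ k, Fintype.card {a // f a = k} = Fintype.card {b // g b = k} := by
    intro k
    simp only [Fintype.card_subtype]
    linarith [card_filter_lt_add_card_filter_eq f k, card_filter_lt_add_card_filter_eq g k, h k,
      hlt k]
  exact ⟨Equiv.ofFiberEquiv fun k => Fintype.equivOfCardEq (hfiber k), Equiv.ofFiberEquiv_map _⟩

end Counting

namespace IsPGroup

variable {p : ℕ} {G : Type*} [Group G] (hp : p.Prime) (hG : IsPGroup p G)
include hp hG

lemma pow_log_orderOf (g : G) : p ^ Nat.log p (orderOf g) = orderOf g := by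
  have := Fact.mk hp
  obtain ⟨k, hk⟩ := iff_orderOf.mp hG g
  rw [hk, Nat.log_pow hp.one_lt]

lemma pow_prime_pow_eq_one_iff (g : G) (i : ℕ) : g ^ p ^ i = 1 ↔ Nat.log p (orderOf g) ≤ i := by
  rw [← orderOf_dvd_iff_pow_eq_one]
  conv_lhs => rw [← hG.pow_log_orderOf hp g]
  exact Nat.pow_dvd_pow_iff_le_right hp.one_lt

lemma pow_log_card_subgroup [Finite G] (H : Subgroup G) :
    p ^ Nat.log p (Nat.card H) = Nat.card H := by
  have := Fact.mk hp
  obtain ⟨k, hk⟩ := iff_card.mp (hG.to_subgroup H)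
  rw [hk, Nat.log_pow hp.one_lt]

end IsPGroup

section Omega

variable {p : ℕ} {G : Type*} [Group G]

lemma Omega_mono : Monotone (Omega p G) := fun i j hij =>
  Subgroup.closure_mono fun x (hx : x ^ p ^ i = 1) => show x ^ p ^ j = 1 by
    obtain ⟨c, hc⟩ := pow_dvd_pow p hij
    rw [hc, pow_mul, hx, one_pow]

lemma Omega_eq_top_s12 [Finite G] {n i : ℕ} (hcard : Nat.card G = p ^ n) (hi : n ≤ i) :
    Omega p G i = ⊤ :=
  eq_top_iff.2 fun x _ => Subgroup.subset_closure <| orderOf_dvd_iff_pow_eq_one.1 <|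
    (orderOf_dvd_natCard x).trans (hcard ▸ pow_dvd_pow p hi)

lemma strictMono_log_card_Omega_add [Finite G] :
    StrictMono fun i => Nat.log p (Nat.card (Omega p G i)) + i := fun _ _ hij =>
  add_lt_add_of_le_of_lt
    (Nat.log_mono_right (Subgroup.card_le_of_le (Omega_mono hij.le))) hij

end Omega

namespace CP2

variable {p : ℕ} {G : Type*} [Group G] (hcp : CP2 G) (hp : p.Prime) (hG : IsPGroup p G)
include hcp hp hG

lemma pow_prime_pow_eq_one_mul {x y : G} {i : ℕ} (hx : x ^ p ^ i = 1) (hy : y ^ p ^ i = 1) :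
    (x * y) ^ p ^ i = 1 := by
  rw [hG.pow_prime_pow_eq_one_iff hp] at hx hy ⊢
  calc Nat.log p (orderOf (x * y))
      ≤ Nat.log p (max (orderOf x) (orderOf y)) := Nat.log_mono_right (hcp x y)
    _ = max (Nat.log p (orderOf x)) (Nat.log p (orderOf y)) :=
      Monotone.map_max fun _ _ => Nat.log_mono_right
    _ ≤ i := max_le hx hy

lemma mem_Omega_iff {x : G} {i : ℕ} : x ∈ Omega p G i ↔ x ^ p ^ i = 1 :=
  ⟨fun hx => Subgroup.closure_induction (fun _ h => h) (one_pow _)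
    (fun _ _ _ _ => hcp.pow_prime_pow_eq_one_mul hp hG)
    (fun _ _ h => by rw [inv_pow, h, inv_one]) hx,
   fun hx => Subgroup.subset_closure hx⟩

lemma card_Omega [Fintype G] (i : ℕ) :
    Nat.card (Omega p G i) = #{x : G | Nat.log p (orderOf x) ≤ i} := by
  rw [← Fintype.card_subtype, ← Nat.card_eq_fintype_card]
  exact Nat.card_congr <| Equiv.subtypeEquivRight fun x =>
    (hcp.mem_Omega_iff hp hG).trans (hG.pow_prime_pow_eq_one_iff hp x i)

lemma psi_add_sub_one_mul_sum_card_Omega [Finite G] {n : ℕ} (hcard : Nat.card G = p ^ n) :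
    psi G + (p - 1) * ∑ i ∈ range n, Nat.card (Omega p G i) * p ^ i = p ^ (2 * n) := by
  have := Fintype.ofFinite G
  have hlog : ∀ x : G, Nat.log p (orderOf x) ≤ n := fun x =>
    (hG.pow_prime_pow_eq_one_iff hp x n).1 (hcard ▸ pow_card_eq_one')
  calc psi G + (p - 1) * ∑ i ∈ range n, Nat.card (Omega p G i) * p ^ i
      = ∑ x : G, p ^ Nat.log p (orderOf x)
          + (p - 1) * ∑ i ∈ range n, #{x : G | Nat.log p (orderOf x) ≤ i} * p ^ i := by
        rw [psi, finsum_eq_sum_of_fintype]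
        simp only [hG.pow_log_orderOf hp, hcp.card_Omega hp hG]
    _ = Fintype.card G * p ^ n := sum_pow_add_sub_one_mul_sum_card_le hp.one_le _ hlog
    _ = p ^ (2 * n) := by rw [← Nat.card_eq_fintype_card, hcard, two_mul, pow_add]

end CP2

theorem card_Omega_eq_of_psi_eq {p n : ℕ} (hp : p.Prime) {P Q : Type*} [Group P] [Finite P]
    [Group Q] [Finite Q] (hPp : IsPGroup p P) (hQp : IsPGroup p Q) (hcpP : CP2 P) (hcpQ : CP2 Q)
    (hcardP : Nat.card P = p ^ n) (hcardQ : Nat.card Q = p ^ n) (hpsi : psi P = psi Q) (i : ℕ) :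
    Nat.card (Omega p P i) = Nat.card (Omega p Q i) := by
  rcases le_or_gt n i with hi | hi
  · rw [Omega_eq_top_s12 hcardP hi, Omega_eq_top_s12 hcardQ hi, Subgroup.card_top, Subgroup.card_top,
      hcardP, hcardQ]
  have hsum : ∑ i ∈ range n, Nat.card (Omega p P i) * p ^ i
      = ∑ i ∈ range n, Nat.card (Omega p Q i) * p ^ i := by
    have hP := hcpP.psi_add_sub_one_mul_sum_card_Omega hp hPp hcardP
    have hQ := hcpQ.psi_add_sub_one_mul_sum_card_Omega hp hQp hcardQ
    exact Nat.eq_of_mul_eq_mul_left (Nat.sub_pos_of_lt hp.one_lt) (by omega)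
  have hexp := StrictMono.eq_of_sum_pow_eq hp.two_le
    ((strictMono_log_card_Omega_add (p := p) (G := P)).comp Fin.val_strictMono)
    ((strictMono_log_card_Omega_add (p := p) (G := Q)).comp Fin.val_strictMono) <| by
      simp only [Function.comp_apply, pow_add, hPp.pow_log_card_subgroup hp,
        hQp.pow_log_card_subgroup hp]
      rw [Fin.sum_univ_eq_sum_range (fun i => Nat.card (Omega p P i) * p ^ i),
        Fin.sum_univ_eq_sum_range (fun i => Nat.card (Omega p Q i) * p ^ i), hsum]
  rw [← hPp.pow_log_card_subgroup hp, ← hQp.pow_log_card_subgroup hp,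
    Nat.add_right_cancel (congrFun hexp ⟨i, hi⟩)]

theorem stmt_12 {p n : ℕ} (hp : p.Prime) (P Q : Type*) [Group P] [Finite P]
    [Group Q] [Finite Q] (hPp : IsPGroup p P) (hQp : IsPGroup p Q)
    (hcpP : CP2 P) (hcpQ : CP2 Q)
    (hcardP : Nat.card P = p ^ n) (hcardQ : Nat.card Q = p ^ n) :
    psi P = psi Q ↔ ∃ f : P ≃ Q, ∀ x : P, orderOf (f x) = orderOf x := by
  refine ⟨fun hpsi => ?_, fun ⟨f, hf⟩ => finsum_eq_of_bijective f f.bijective fun x => (hf x).symm⟩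
  have := Fintype.ofFinite P
  have := Fintype.ofFinite Q
  obtain ⟨e, he⟩ := exists_equiv_apply_eq_of_card_le_eq (fun x : P => Nat.log p (orderOf x))
    (fun y : Q => Nat.log p (orderOf y)) fun i => by
      rw [← hcpP.card_Omega hp hPp, ← hcpQ.card_Omega hp hQp,
        card_Omega_eq_of_psi_eq hp hPp hQp hcpP hcpQ hcardP hcardQ hpsi]
  exact ⟨e, fun x => by rw [← hQp.pow_log_orderOf hp, he, hPp.pow_log_orderOf hp]⟩
end

section
/- Let G be a finite group in CP₂ and let x, y ∈ G with o(x) ≠ o(y). Then o(xy) = max{o(x), o(y)}. -/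
theorem stmt_13 {G : Type*} [Group G] [Finite G] (hcp : CP2 G)
    (x y : G) (h : orderOf x ≠ orderOf y) :
    orderOf (x * y) = max (orderOf x) (orderOf y) := by
  rcases lt_or_gt_of_ne h with hlt | hlt
  · have hmax : max (orderOf x) (orderOf y) = orderOf y := max_eq_right hlt.le
    rw [hmax]
    refine le_antisymm (hmax ▸ hcp x y) ?_
    have h2 := hcp x⁻¹ (x * y)
    rw [inv_mul_cancel_left, orderOf_inv] at h2
    rcases max_cases (orderOf x) (orderOf (x * y)) with ⟨he, _⟩ | ⟨he, _⟩
    · omega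
    · omega
  · have hmax : max (orderOf x) (orderOf y) = orderOf x := max_eq_left hlt.le
    rw [hmax]
    refine le_antisymm (hmax ▸ hcp x y) ?_
    have h2 := hcp (x * y) y⁻¹
    rw [mul_inv_cancel_right, orderOf_inv] at h2
    rcases max_cases (orderOf (x * y)) (orderOf y) with ⟨he, _⟩ | ⟨he, _⟩
    · omega
    · omega
end

section
/- Let P and Q be finite p-groups of the same order p^n with exp(P) = p^m, Ω_{m-1}(P) ≠ P, and exp(Q) ≤ p^{m-1}. Then ψ(P) > p^n·p^{m-1} ≥ ψ(Q). -/
theorem stmt_18 {p n m : ℕ} (hp : p.Prime) (P Q : Type*) [Group P] [Finite P]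
    [Group Q] [Finite Q] (hPp : IsPGroup p P) (hQp : IsPGroup p Q)
    (hcardP : Nat.card P = p ^ n) (hcardQ : Nat.card Q = p ^ n)
    (hexpP : Monoid.exponent P = p ^ m) (hM : Omega p P (m - 1) ≠ ⊤)
    (hexpQ : Monoid.exponent Q ≤ p ^ (m - 1)) :
    p ^ n * p ^ (m - 1) < psi P ∧ psi Q ≤ p ^ n * p ^ (m - 1) := by
  classical
  have hp1 : 1 < p := hp.one_lt
  have := Fintype.ofFinite P
  have := Fintype.ofFinite Q
  -- an element outside Omega
  obtain ⟨x₀, hx₀⟩ : ∃ x : P, x ∉ Omega p P (m - 1) := by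
    by_contra h
    push_neg at h
    exact hM ((Subgroup.eq_top_iff' _).mpr h)
  have hx₀' : x₀ ^ p ^ (m - 1) ≠ 1 := fun h => hx₀ (Subgroup.subset_closure h)
  -- m ≥ 1
  have hm : 1 ≤ m := by
    by_contra h
    have hm0 : m = 0 := by omega
    rw [hm0, pow_zero] at hexpP
    have : Subsingleton P := Monoid.exp_eq_one_iff.mp hexpP
    exact hx₀' (by rw [Subsingleton.elim x₀ 1]; simp)
  constructor
  · -- the P part
    have hpsi : psi P = ∑ x : P, orderOf x := finsum_eq_sum_of_fintype _
    set S : Finset P := Finset.univ.filter (fun x : P => x ^ p ^ (m - 1) = 1) with hS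
    -- S.card ≤ card Omega
    have h1 : S.card ≤ Nat.card (Omega p P (m - 1)) := by
      rw [Nat.card_eq_fintype_card, Fintype.card_subtype]
      apply Finset.card_le_card
      intro x hx
      simp only [hS, Finset.mem_filter] at hx ⊢
      exact ⟨hx.1, Subgroup.subset_closure hx.2⟩
    -- card Omega ≤ p ^ (n-1) and n ≥ 1
    have hdvd : Nat.card (Omega p P (m - 1)) ∣ p ^ n :=
      hcardP ▸ Subgroup.card_subgroup_dvd_card _
    obtain ⟨j, hj, hje⟩ := (Nat.dvd_prime_pow hp).mp hdvd
    have hjn : j < n := by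
      rcases lt_or_eq_of_le hj with h | h
      · exact h
      · exfalso
        apply hM
        apply Subgroup.eq_top_of_card_eq
        rw [hje, h, hcardP]
    have hn1 : 1 ≤ n := by omega
    have hcardO : Nat.card (Omega p P (m - 1)) ≤ p ^ (n - 1) := by
      rw [hje]
      exact Nat.pow_le_pow_right hp.pos (by omega)
    have hScard : S.card ≤ p ^ (n - 1) := le_trans h1 hcardO
    have hS1 : 1 ≤ S.card := by
      apply Finset.card_pos.mpr
      exact ⟨1, by simp [hS]⟩
    -- orders outside S are ≥ p ^ m
    have horder : ∀ x : P, x ∉ S → p ^ m ≤ orderOf x := by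
      intro x hx
      simp only [hS, Finset.mem_filter, Finset.mem_univ, true_and] at hx
      have hdvdx : orderOf x ∣ p ^ m := hexpP ▸ Monoid.order_dvd_exponent x
      obtain ⟨k, hk, hke⟩ := (Nat.dvd_prime_pow hp).mp hdvdx
      have hnd : ¬ orderOf x ∣ p ^ (m - 1) := fun h => hx (orderOf_dvd_iff_pow_eq_one.mp h)
      have hkm : k = m := by
        by_contra h
        exact hnd (hke ▸ pow_dvd_pow p (by omega))
      rw [hke, hkm]
    -- split the sum
    rw [hpsi, ← Finset.sum_filter_add_sum_filter_not Finset.univ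
      (fun x : P => x ^ p ^ (m - 1) = 1) (fun x => orderOf x)]
    have hsum1 : S.card ≤ ∑ x ∈ S, orderOf x := by
      calc S.card = ∑ _x ∈ S, 1 := by simp
        _ ≤ ∑ x ∈ S, orderOf x := Finset.sum_le_sum (fun x _ => orderOf_pos x)
    have hsum2 : (Finset.univ.filter (fun x : P => ¬ x ^ p ^ (m - 1) = 1)).card * p ^ m ≤
        ∑ x ∈ Finset.univ.filter (fun x : P => ¬ x ^ p ^ (m - 1) = 1), orderOf x := by
      calc (Finset.univ.filter (fun x : P => ¬ x ^ p ^ (m - 1) = 1)).card * p ^ m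
          = ∑ _x ∈ Finset.univ.filter (fun x : P => ¬ x ^ p ^ (m - 1) = 1), p ^ m := by
            rw [Finset.sum_const, smul_eq_mul]
        _ ≤ _ := Finset.sum_le_sum (fun x hx => horder x (fun hmem => (Finset.mem_filter.mp hx).2 (Finset.mem_filter.mp hmem).2))
    have hcc : (Finset.univ.filter (fun x : P => ¬ x ^ p ^ (m - 1) = 1)).card
        = p ^ n - S.card := by
      rw [Finset.filter_not, Finset.card_sdiff_of_subset (Finset.filter_subset _ _),
        Finset.card_univ, ← Nat.card_eq_fintype_card, hcardP]
    -- arithmetic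
    set s := S.card with hsdef
    have key : p ^ n * p ^ (m - 1) < s + (p ^ n - s) * p ^ m := by
      have hpn : p ^ n = p * p ^ (n - 1) := by
        rw [← pow_succ']
        congr 1
        omega
      have hpm : p ^ m = p * p ^ (m - 1) := by
        rw [← pow_succ']
        congr 1
        omega
      set a := p ^ (n - 1) with ha
      set t := p ^ (m - 1) with ht
      have h2a : 2 * a ≤ p * a := Nat.mul_le_mul_right a (by omega)
      have hge : a ≤ p ^ n - s := by
        rw [hpn]; omega
      have : a * (p * t) ≤ (p ^ n - s) * (p * t) :=
        Nat.mul_le_mul_right _ hge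
      calc p ^ n * t = a * (p * t) := by rw [hpn]; ring
        _ ≤ (p ^ n - s) * (p * t) := this
        _ = (p ^ n - s) * p ^ m := by rw [hpm]
        _ < s + (p ^ n - s) * p ^ m := by omega
    calc p ^ n * p ^ (m - 1) < s + (p ^ n - s) * p ^ m := key
      _ ≤ ∑ x ∈ S, orderOf x +
          ∑ x ∈ Finset.univ.filter (fun x : P => ¬ x ^ p ^ (m - 1) = 1), orderOf x := by
        apply Nat.add_le_add hsum1
        rw [← hcc]
        exact hsum2
  · -- the Q part
    have hpsi : psi Q = ∑ x : Q, orderOf x := finsum_eq_sum_of_fintype _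
    rw [hpsi]
    calc ∑ x : Q, orderOf x ≤ ∑ _x : Q, p ^ (m - 1) :=
          Finset.sum_le_sum (fun x _ =>
            le_trans (Monoid.orderOf_le_exponent Monoid.ExponentExists.of_finite x) hexpQ)
      _ = p ^ n * p ^ (m - 1) := by
        rw [Finset.sum_const, smul_eq_mul, Finset.card_univ, ← Nat.card_eq_fintype_card, hcardQ]
end

section
/- For any finite p-group P, ψ(P) ≡ 1 (mod p), i.e., ψ(P) = 1 + kp for some natural number k. -/
theorem stmt_19 {p : ℕ} (hp : p.Prime) (P : Type*) [Group P] [Finite P]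
    (hP : IsPGroup p P) : ∃ k : ℕ, psi P = 1 + k * p := by
  haveI := Fact.mk hp
  haveI := Fintype.ofFinite P
  haveI : DecidableEq P := Classical.decEq P
  have hpsi : psi P = ∑ x : P, orderOf x := finsum_eq_sum_of_fintype _
  have hsplit : psi P = 1 + ∑ x ∈ Finset.univ.erase (1 : P), orderOf x := by
    rw [hpsi, ← Finset.add_sum_erase _ _ (Finset.mem_univ (1 : P)), orderOf_one]
  have hdvd : p ∣ ∑ x ∈ Finset.univ.erase (1 : P), orderOf x := by
    apply Finset.dvd_sum
    intro x hx
    obtain ⟨k, hk⟩ := (IsPGroup.iff_orderOf.mp hP) x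
    have hx1 : x ≠ 1 := (Finset.mem_erase.mp hx).1
    have : orderOf x ≠ 1 := by simpa [orderOf_eq_one_iff] using hx1
    rcases Nat.eq_zero_or_pos k with rfl | hkpos
    · simp at hk; exact absurd hk hx1
    · rw [hk]
      exact dvd_pow_self p hkpos.ne'
  obtain ⟨k, hk⟩ := hdvd
  exact ⟨k, by rw [hsplit, hk, mul_comm]⟩
end
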